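/- If ⟨u,v⟩ = -1/2 for unit covectors u, v, then the triple reset map simplifies to p Γ(u)Γ(v)Γ(u) = p - 2(u+v)(⟨p,u⟩ + ⟨p,v⟩) for every momentum p (interpreting (u+v)c as the covector scaled by the scalar c = ⟨p,u⟩+⟨p,v⟩), and this expression is symmetric in u and v. -/

import Mathlib

open Matrix

noncomputable def kin {n : ℕ} (M : Matrix (Fin n) (Fin n) ℝ)
    (x y : Matrix (Fin 1) (Fin n) ℝ) : ℝ :=
  (x * M⁻¹ * yᵀ) 0 0

noncomputable def Gam {n : ℕ} (M : Matrix (Fin n) (Fin n) ℝ)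
    (u : Matrix (Fin 1) (Fin n) ℝ) : Matrix (Fin n) (Fin n) ℝ :=
  1 - (2 / kin M u u) • (M⁻¹ * uᵀ * u)

/-!
Each `Gam M w` acts on covectors as the reflection `p ↦ p - 2 ⟨p,w⟩/⟨w,w⟩ • w` in the inner
product `⟨x,y⟩ = x M⁻¹ yᵀ`. For unit `u`, `v` with `⟨u,v⟩ = -1/2`, composing three reflections
and expanding the inner products with bilinearity and symmetry collapses all terms onto `u + v`,
with coefficient `2 (⟨p,u⟩ + ⟨p,v⟩)`; the expression is symmetric in `u` and `v`, so `Γ(v)Γ(u)Γ(v)`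
agrees with it as well.
-/

section

variable {n : ℕ} (M : Matrix (Fin n) (Fin n) ℝ)

lemma kin_sub_left (x y z : Matrix (Fin 1) (Fin n) ℝ) :
    kin M (x - y) z = kin M x z - kin M y z := by
  simp [kin, Matrix.sub_mul]

lemma kin_smul_left (c : ℝ) (x z : Matrix (Fin 1) (Fin n) ℝ) :
    kin M (c • x) z = c * kin M x z := by
  simp [kin, Matrix.smul_mul]

lemma kin_comm {M : Matrix (Fin n) (Fin n) ℝ} (hM : M.IsSymm) (x y : Matrix (Fin 1) (Fin n) ℝ) :
    kin M x y = kin M y x := by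
  have h : (x * M⁻¹ * yᵀ)ᵀ = y * M⁻¹ * xᵀ := by
    rw [transpose_mul, transpose_mul, transpose_transpose, hM.inv.eq, Matrix.mul_assoc]
  change (x * M⁻¹ * yᵀ) 0 0 = (y * M⁻¹ * xᵀ) 0 0
  rw [← h, transpose_apply]

lemma mul_rankOne_eq_kin_smul (p w : Matrix (Fin 1) (Fin n) ℝ) :
    p * (M⁻¹ * wᵀ * w) = kin M p w • w := by
  rw [← Matrix.mul_assoc, ← Matrix.mul_assoc]
  ext i j
  obtain rfl : i = 0 := Subsingleton.elim i 0
  simp [Matrix.mul_apply, kin]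

lemma mul_Gam (p w : Matrix (Fin 1) (Fin n) ℝ) :
    p * Gam M w = p - (2 * kin M p w / kin M w w) • w := by
  rw [Gam, Matrix.mul_sub, Matrix.mul_one, Matrix.mul_smul, mul_rankOne_eq_kin_smul, smul_smul,
    div_mul_eq_mul_div]

lemma mul_Gam_of_kin_self_eq_one {w : Matrix (Fin 1) (Fin n) ℝ} (hw : kin M w w = 1)
    (p : Matrix (Fin 1) (Fin n) ℝ) :
    p * Gam M w = p - (2 * kin M p w) • w := by
  rw [mul_Gam, hw, div_one]

lemma mul_Gam_mul_Gam_mul_Gam {u v : Matrix (Fin 1) (Fin n) ℝ}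
    (huu : kin M u u = 1) (hvv : kin M v v = 1)
    (huv : kin M u v = -(1/2)) (hvu : kin M v u = -(1/2)) (p : Matrix (Fin 1) (Fin n) ℝ) :
    p * Gam M u * Gam M v * Gam M u = p - (2 * (kin M p u + kin M p v)) • (u + v) := by
  rw [mul_Gam_of_kin_self_eq_one M huu, mul_Gam_of_kin_self_eq_one M hvv,
    mul_Gam_of_kin_self_eq_one M huu]
  simp only [kin_sub_left, kin_smul_left, huu, huv, hvu]
  module

end

theorem triple_reset_simplifies {n : ℕ}
    (M : Matrix (Fin n) (Fin n) ℝ) (hM : M.PosDef)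
    (u v : Matrix (Fin 1) (Fin n) ℝ)
    (huu : kin M u u = 1) (hvv : kin M v v = 1)
    (huv : kin M u v = -(1/2)) :
    ∀ p : Matrix (Fin 1) (Fin n) ℝ,
      p * Gam M u * Gam M v * Gam M u =
        p - (2 * (kin M p u + kin M p v)) • (u + v) ∧
      p * Gam M v * Gam M u * Gam M v =
        p - (2 * (kin M p u + kin M p v)) • (u + v) := by
  intro p
  have hvu : kin M v u = -(1/2) := by
    rw [kin_comm (by simpa using hM.isHermitian : M.IsSymm), huv]
  refine ⟨mul_Gam_mul_Gam_mul_Gam M huu hvv huv hvu p, ?_⟩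
  rw [mul_Gam_mul_Gam_mul_Gam M hvv huu hvu huv p, add_comm (kin M p v), add_comm v]
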